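/- Let ω ∈ R^d be Diophantine of class τ with constant ν(ω;τ), let N ≥ 1 be an integer, A > 0, and assume 2τ > d. Then there exist constants C > 0 (depending on τ, d, A and ν(ω;τ)) and ρ_0 > 0 such that for every 0 < ρ < ρ_0 the two-dimensional Lebesgue measure of the set {λ ∈ C : ρ < |λ − 1| < 2ρ and ν(λ;ω,τ) |λ − 1|^{N+1} > A} is at most C A^{-2} ρ^{2(N+1) + (2τ − d)/τ}. In particular, the measure of the complement of Λ(A;ω,τ,N) in the annulus ρ < |λ−1| < 2ρ is much smaller than the area of the annulus as ρ → 0. -/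

import Mathlib

open scoped Real ENNReal
open Matrix MeasureTheory Filter Asymptotics

noncomputable section

namespace KAM

/-! ### Diophantine constants -/

/-- `|k| = ∑ |k_j|` for an integer frequency vector. -/
def intNorm {d : ℕ} (k : Fin d → ℤ) : ℝ := ∑ j, |(k j : ℝ)|

/-- `k · ω`. -/
def intDot {d : ℕ} (k : Fin d → ℤ) (ω : Fin d → ℝ) : ℝ := ∑ j, (k j : ℝ) * ω j

/-- `e^{2 π i k·ω}`. -/
def eDot {d : ℕ} (k : Fin d → ℤ) (ω : Fin d → ℝ) : ℂ :=
  Complex.exp (2 * Real.pi * Complex.I * (intDot k ω : ℂ))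

/-- The Diophantine constant `ν(λ; ω, τ) ∈ [0,∞]` of a complex number `λ`
with respect to `ω`, `ν(λ; ω, τ) = sup_{k ≠ 0} |e^{2πik·ω} − λ|⁻¹ |k|^{-τ}`. -/
def nuC {d : ℕ} (ω : Fin d → ℝ) (τ : ℝ) (lam : ℂ) : ℝ≥0∞ :=
  ⨆ k : {k : Fin d → ℤ // k ≠ 0},
    (ENNReal.ofReal ‖eDot k.1 ω - lam‖)⁻¹ * ENNReal.ofReal (intNorm k.1) ^ (-τ)

/-- The Diophantine constant `ν(ω; τ)` of the frequency `ω`. -/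
def nuOmega {d : ℕ} (ω : Fin d → ℝ) (τ : ℝ) : ℝ≥0∞ := nuC ω τ 1

/-- `ω` is Diophantine of class `τ` (i.e. `ν(ω;τ) < ∞`). -/
def IsDiophantine {d : ℕ} (ω : Fin d → ℝ) (τ : ℝ) : Prop := nuOmega ω τ ≠ ∞

/-! ### Strips, analytic function spaces on the complexified torus -/

/-- The closed strip `T^d_ρ` (as a subset of `ℂ^d`; functions on the torus are
represented by their `ℤ^d`-periodic lifts). -/
def Strip (d : ℕ) (ρ : ℝ) : Set (Fin d → ℂ) := {z | ∀ j, |(z j).im| ≤ ρ}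

/-- The open strip (interior of `T^d_ρ`). -/
def StripO (d : ℕ) (ρ : ℝ) : Set (Fin d → ℂ) := {z | ∀ j, |(z j).im| < ρ}

/-- Sup norm `‖·‖_ρ` over the strip `T^d_ρ`. -/
def stripNorm {d : ℕ} {E : Type*} [NormedAddCommGroup E] (ρ : ℝ)
    (f : (Fin d → ℂ) → E) : ℝ :=
  ⨆ z : Strip d ρ, ‖f z.1‖

/-- `ℤ^d`-periodicity (functions on the torus). -/
def ZPeriodic {d : ℕ} {E : Type*} (f : (Fin d → ℂ) → E) : Prop :=
  ∀ (z : Fin d → ℂ) (k : Fin d → ℤ), f (z + fun j => (k j : ℂ)) = f z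

/-- Membership in `A_ρ`: analytic in the interior of the strip `T^d_ρ`,
continuous and bounded on the closed strip. -/
structure MemA {d : ℕ} {E : Type*} [NormedAddCommGroup E] [NormedSpace ℂ E]
    (ρ : ℝ) (f : (Fin d → ℂ) → E) : Prop where
  analyticOn : AnalyticOn ℂ f (StripO d ρ)
  continuousOn : ContinuousOn f (Strip d ρ)
  bounded : ∃ M : ℝ, ∀ z ∈ Strip d ρ, ‖f z‖ ≤ M

/-- The translation `T_ω : θ ↦ θ + ω`. -/
def shift {d : ℕ} (ω : Fin d → ℝ) (z : Fin d → ℂ) : Fin d → ℂ :=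
  z + fun j => (ω j : ℂ)

/-- Average over the torus `T^d` of a function on the complexified torus. -/
def torusAvg {d : ℕ} {E : Type*} [NormedAddCommGroup E] [NormedSpace ℝ E]
    (f : (Fin d → ℂ) → E) : E :=
  ∫ θ in Set.Icc (0 : Fin d → ℝ) 1, f (fun j => (θ j : ℂ))

/-- Entrywise average over `T^d` of a matrix-valued function. -/
def matAvg {d m n : ℕ} (F : (Fin d → ℂ) → Matrix (Fin m) (Fin n) ℂ) :
    Matrix (Fin m) (Fin n) ℂ :=
  Matrix.of fun i j => torusAvg fun θ => F θ i j

/-- The lift of an integer vector `k ∈ ℤ^d` to the phase space `ℂ^{2d} = ℂ^d × ℂ^d`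
(`k` in the angle components, `0` in the action components). -/
def liftZ {d : ℕ} (k : Fin d → ℤ) : Fin (d + d) → ℂ :=
  Fin.addCases (motive := fun _ => ℂ) (fun j => (k j : ℂ)) fun _ => 0

/-- Quasi-periodicity of an embedding `K : T^d → M = T^d × B` (written in the
universal cover). -/
def QuasiPeriodic {d : ℕ} (K : (Fin d → ℂ) → Fin (d + d) → ℂ) : Prop :=
  ∀ (z : Fin d → ℂ) (k : Fin d → ℤ), K (z + fun j => (k j : ℂ)) = K z + liftZ k

/-- Periodicity of a map of the phase space `M = T^d × B` (written in the
universal cover). -/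
def PhasePeriodic {d : ℕ} (f : (Fin (d + d) → ℂ) → Fin (d + d) → ℂ) : Prop :=
  ∀ (x : Fin (d + d) → ℂ) (k : Fin d → ℤ), f (x + liftZ k) = f x + liftZ k

/-! ### Jacobians as matrices -/

/-- `A` is the Jacobian matrix of `f` at `z`. -/
def hasJacobianAt {m n : ℕ} (f : (Fin n → ℂ) → Fin m → ℂ)
    (A : Matrix (Fin m) (Fin n) ℂ) (z : Fin n → ℂ) : Prop :=
  HasFDerivAt f (LinearMap.toContinuousLinearMap (Matrix.mulVecLin A)) z

/-- Real version: `A` is the Jacobian matrix of `f` at `z`. -/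
def hasJacobianAtR {m n : ℕ} (f : (Fin n → ℝ) → Fin m → ℝ)
    (A : Matrix (Fin m) (Fin n) ℝ) (z : Fin n → ℝ) : Prop :=
  HasFDerivAt f (LinearMap.toContinuousLinearMap (Matrix.mulVecLin A)) z

/-! ### Adapted frames -/

/-- The normalization matrix `N = (DK^⊤ DK)⁻¹`. -/
def nMat {d : ℕ} {R : Type*} [CommRing R] (DK : Matrix (Fin (d + d)) (Fin d) R) :
    Matrix (Fin d) (Fin d) R := (DKᵀ * DK)⁻¹

/-- The adapted frame `M = [DK | J⁻¹ DK N]`, where `Jx` is the value of the matrix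
representing the symplectic form at the relevant point. -/
def frameM {d : ℕ} {R : Type*} [CommRing R] (Jx : Matrix (Fin (d + d)) (Fin (d + d)) R)
    (DK : Matrix (Fin (d + d)) (Fin d) R) : Matrix (Fin (d + d)) (Fin (d + d)) R :=
  Matrix.reindex (Equiv.refl _) finSumFinEquiv
    (Matrix.fromCols DK (Jx⁻¹ * DK * nMat DK))

/-- First `d` rows of a `2d × n` matrix. -/
def rowsFst {d n : ℕ} {R : Type*} (A : Matrix (Fin (d + d)) (Fin n) R) :
    Matrix (Fin d) (Fin n) R := A.submatrix (Fin.castAdd d) id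

/-- Last `d` rows of a `2d × n` matrix. -/
def rowsSnd {d n : ℕ} {R : Type*} (A : Matrix (Fin (d + d)) (Fin n) R) :
    Matrix (Fin d) (Fin n) R := A.submatrix (Fin.natAdd d) id

/-- Entrywise sup norm of a matrix. -/
def matNorm {m n : Type*} {α : Type*} [SeminormedAddCommGroup α] (A : Matrix m n α) : ℝ :=
  ⨆ i, ⨆ j, ‖A i j‖

/-- Sup over the strip `T^d_ρ` of the entrywise norm of a matrix-valued function. -/
def matStripNorm {d m n : ℕ} (ρ : ℝ) (F : (Fin d → ℂ) → Matrix (Fin m) (Fin n) ℂ) : ℝ :=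
  ⨆ z : Strip d ρ, matNorm (F z.1)

/-- The matrix `S(θ)` appearing in the automatic reducibility:
`S(θ) = N(θ+ω)^⊤ DK(θ+ω)^⊤ (Df∘K)(θ) (J⁻¹∘K)(θ) DK(θ) N(θ)
  − λ N(θ+ω)^⊤ DK(θ+ω)^⊤ (J⁻¹∘K)(θ+ω) DK(θ+ω) N(θ+ω)`. -/
def SmatC {d : ℕ} (lam : ℂ) (ω : Fin d → ℝ)
    (J : (Fin (d + d) → ℂ) → Matrix (Fin (d + d)) (Fin (d + d)) ℂ)
    (K : (Fin d → ℂ) → Fin (d + d) → ℂ)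
    (DK : (Fin d → ℂ) → Matrix (Fin (d + d)) (Fin d) ℂ)
    (DfK : (Fin d → ℂ) → Matrix (Fin (d + d)) (Fin (d + d)) ℂ)
    (θ : Fin d → ℂ) : Matrix (Fin d) (Fin d) ℂ :=
  (nMat (DK (shift ω θ)))ᵀ * (DK (shift ω θ))ᵀ * DfK θ * (J (K θ))⁻¹ * DK θ * nMat (DK θ)
    - lam • ((nMat (DK (shift ω θ)))ᵀ * (DK (shift ω θ))ᵀ * (J (K (shift ω θ)))⁻¹ *
        DK (shift ω θ) * nMat (DK (shift ω θ)))

/-- The matrix `Ã(θ) = (M ∘ T_ω)(θ)⁻¹ (D_μ f ∘ K)(θ)`. -/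
def AtildeC {d : ℕ} (ω : Fin d → ℝ)
    (J : (Fin (d + d) → ℂ) → Matrix (Fin (d + d)) (Fin (d + d)) ℂ)
    (K : (Fin d → ℂ) → Fin (d + d) → ℂ)
    (DK : (Fin d → ℂ) → Matrix (Fin (d + d)) (Fin d) ℂ)
    (DmufK : (Fin d → ℂ) → Matrix (Fin (d + d)) (Fin d) ℂ)
    (θ : Fin d → ℂ) : Matrix (Fin (d + d)) (Fin d) ℂ :=
  (frameM (J (K (shift ω θ))) (DK (shift ω θ)))⁻¹ * DmufK θ

/-- The non-degeneracy condition: there exists a zero-average solution `B_b` of the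
cohomology equation `λ B_b − B_b ∘ T_ω = −(Ã₂)⁰` such that the `2d × 2d` matrix
`[[avg S, avg (S B_b⁰) + avg Ã₁],[(λ−1) Id, avg Ã₂]]` has nonzero determinant. -/
def HNDat {d : ℕ} (lam : ℂ) (ω : Fin d → ℝ)
    (S A1 A2 : (Fin d → ℂ) → Matrix (Fin d) (Fin d) ℂ) : Prop :=
  ∃ Bb : (Fin d → ℂ) → Matrix (Fin d) (Fin d) ℂ,
    matAvg Bb = 0 ∧
    (∀ θ : Fin d → ℝ,
      lam • Bb (fun j => (θ j : ℂ)) - Bb (shift ω fun j => (θ j : ℂ))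
        = -(A2 (fun j => (θ j : ℂ)) - matAvg A2)) ∧
    (Matrix.fromBlocks (matAvg S) (matAvg (fun θ => S θ * Bb θ) + matAvg A1)
      ((lam - 1) • (1 : Matrix (Fin d) (Fin d) ℂ)) (matAvg A2)).det ≠ 0

/-- The non-degeneracy condition together with the bound `T` on the norm of the
inverse of the non-degeneracy matrix (the twist constant). -/
def H3twist {d : ℕ} (lam : ℂ) (ω : Fin d → ℝ) (TT : ℝ)
    (S A1 A2 : (Fin d → ℂ) → Matrix (Fin d) (Fin d) ℂ) : Prop :=
  ∃ Bb : (Fin d → ℂ) → Matrix (Fin d) (Fin d) ℂ,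
    matAvg Bb = 0 ∧
    (∀ θ : Fin d → ℝ,
      lam • Bb (fun j => (θ j : ℂ)) - Bb (shift ω fun j => (θ j : ℂ))
        = -(A2 (fun j => (θ j : ℂ)) - matAvg A2)) ∧
    (Matrix.fromBlocks (matAvg S) (matAvg (fun θ => S θ * Bb θ) + matAvg A1)
      ((lam - 1) • (1 : Matrix (Fin d) (Fin d) ℂ)) (matAvg A2)).det ≠ 0 ∧
    matNorm (Matrix.fromBlocks (matAvg S) (matAvg (fun θ => S θ * Bb θ) + matAvg A1)
      ((lam - 1) • (1 : Matrix (Fin d) (Fin d) ℂ)) (matAvg A2))⁻¹ ≤ TT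

/-- The normalization condition for `K` with respect to the reference embedding `K0`:
`∫_{T^d} [M(θ)⁻¹ (K(θ) − K0(θ))]₁ dθ = 0`. -/
def NormalizedWrt {d : ℕ}
    (J : (Fin (d + d) → ℂ) → Matrix (Fin (d + d)) (Fin (d + d)) ℂ)
    (K0 : (Fin d → ℂ) → Fin (d + d) → ℂ)
    (DK0 : (Fin d → ℂ) → Matrix (Fin (d + d)) (Fin d) ℂ)
    (K : (Fin d → ℂ) → Fin (d + d) → ℂ) : Prop :=
  ∀ i : Fin d,
    torusAvg (fun θ =>
      ((frameM (J (K0 θ)) (DK0 θ))⁻¹.mulVec (K θ - K0 θ)) (Fin.castAdd d i)) = 0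

/-! ### Symplectic structure and conformally symplectic families -/

/-- `J` represents an exact analytic symplectic form on `M = T^d × B`. -/
structure SympForm {d : ℕ}
    (J : (Fin (d + d) → ℂ) → Matrix (Fin (d + d)) (Fin (d + d)) ℂ) : Prop where
  antisymm : ∀ x, (J x)ᵀ = -J x
  nondeg : ∀ x, IsUnit (J x).det
  analytic : ∀ i j, AnalyticOnNhd ℂ (fun x => J x i j) Set.univ
  periodic : ∀ (x : Fin (d + d) → ℂ) (k : Fin d → ℤ), J (x + liftZ k) = J x
  exact' : ∃ (a : (Fin (d + d) → ℂ) → Fin (d + d) → ℂ)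
      (Da : (Fin (d + d) → ℂ) → Matrix (Fin (d + d)) (Fin (d + d)) ℂ),
      (∀ x, hasJacobianAt a (Da x) x) ∧ ∀ x, J x = (Da x)ᵀ - Da x

/-- The data of an analytic family `f_{μ,ε}` of maps of `M = T^d × B`, together with
its Jacobian `Df` in the phase-space variable, its derivative `Dμf` with respect to
the drift parameter `μ`, and the conformal factor `λ(ε)`. -/
structure ConfFamily (d : ℕ) where
  f : (Fin d → ℂ) → ℂ → (Fin (d + d) → ℂ) → Fin (d + d) → ℂ
  Df : (Fin d → ℂ) → ℂ → (Fin (d + d) → ℂ) → Matrix (Fin (d + d)) (Fin (d + d)) ℂ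
  Dmuf : (Fin d → ℂ) → ℂ → (Fin (d + d) → ℂ) → Matrix (Fin (d + d)) (Fin d) ℂ
  lam : ℂ → ℂ

/-- `F` is an analytic family of conformally symplectic maps (`f_{μ,ε}^* Ω = λ(ε) Ω`)
for `μ` in the open set `Γ`. -/
structure IsConfFamily {d : ℕ} (F : ConfFamily d)
    (J : (Fin (d + d) → ℂ) → Matrix (Fin (d + d)) (Fin (d + d)) ℂ)
    (Γ : Set (Fin d → ℂ)) : Prop where
  analytic : AnalyticOn ℂ
    (fun p : (Fin d → ℂ) × ℂ × (Fin (d + d) → ℂ) => F.f p.1 p.2.1 p.2.2)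
    {p : (Fin d → ℂ) × ℂ × (Fin (d + d) → ℂ) | p.1 ∈ Γ}
  jac_x : ∀ μ ∈ Γ, ∀ (ε : ℂ) (x : Fin (d + d) → ℂ),
    hasJacobianAt (F.f μ ε) (F.Df μ ε x) x
  jac_mu : ∀ μ ∈ Γ, ∀ (ε : ℂ) (x : Fin (d + d) → ℂ),
    HasFDerivAt (fun μ' => F.f μ' ε x)
      (LinearMap.toContinuousLinearMap (Matrix.mulVecLin (F.Dmuf μ ε x))) μ
  conf : ∀ μ ∈ Γ, ∀ (ε : ℂ) (x : Fin (d + d) → ℂ),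
    (F.Df μ ε x)ᵀ * J (F.f μ ε x) * F.Df μ ε x = F.lam ε • J x
  periodic : ∀ μ ∈ Γ, ∀ ε : ℂ, PhasePeriodic (F.f μ ε)

/-- Hypothesis Hλ: the conformal factor is analytic near `0`, `λ(0)=1` and
`λ(ε) − 1 = α ε^a + O(|ε|^{a+1})` with `a ≥ 1` an integer and `α ≠ 0`. -/
def Hlambda (lam : ℂ → ℂ) (a : ℕ) (α : ℂ) : Prop :=
  AnalyticAt ℂ lam 0 ∧ lam 0 = 1 ∧ 1 ≤ a ∧ α ≠ 0 ∧
    (fun ε => lam ε - 1 - α * ε ^ a) =O[nhds (0 : ℂ)] fun ε => ε ^ (a + 1)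

/-! ### The sets Λ, Υ, G -/

/-- `Λ(A; ω, τ, N) = {λ ∈ ℂ : ν(λ;ω,τ) |λ−1|^{N+1} ≤ A}`. -/
def LambdaSet {d : ℕ} (ω : Fin d → ℝ) (τ : ℝ) (N : ℕ) (A : ℝ) : Set ℂ :=
  {lam | nuC ω τ lam * ENNReal.ofReal (‖lam - 1‖ ^ (N + 1)) ≤ ENNReal.ofReal A}

/-- `Υ(A; ω, τ) = {λ ∈ ℂ : ν(λ;ω,τ) ≤ A}`. -/
def Upsilon {d : ℕ} (ω : Fin d → ℝ) (τ : ℝ) (A : ℝ) : Set ℂ :=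
  {lam | nuC ω τ lam ≤ ENNReal.ofReal A}

/-- `G(A; ω, τ, N) = {ε ∈ ℂ : ν(λ(ε);ω,τ) |λ(ε)−1|^{N+1} ≤ A}`. -/
def Gset {d : ℕ} (lam : ℂ → ℂ) (ω : Fin d → ℝ) (τ : ℝ) (N : ℕ) (A : ℝ) : Set ℂ :=
  {ε | nuC ω τ (lam ε) * ENNReal.ofReal (‖lam ε - 1‖ ^ (N + 1)) ≤ ENNReal.ofReal A}

/-- `G_{r₀}(A; ω, τ, N) = G(A; ω, τ, N) ∩ {|ε| ≤ r₀}`. -/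
def GsetR {d : ℕ} (lam : ℂ → ℂ) (ω : Fin d → ℝ) (τ : ℝ) (N : ℕ) (A r0 : ℝ) : Set ℂ :=
  Gset lam ω τ N A ∩ Metric.closedBall 0 r0

/-- `z0` is `m`-tangentially accessible from both sides in the set `C`. -/
def TangAccessBoth (C : Set ℂ) (m : ℕ) (z0 : ℂ) : Prop :=
  ∃ u : ℂ, ‖u‖ = 1 ∧ ∃ δ > (0 : ℝ), ∃ γ > (0 : ℝ),
    ∀ t s : ℝ, |t| < δ → |s| < δ → γ * |t| ^ m ≤ |s| →
      z0 + (t : ℂ) * u + (s : ℂ) * (starRingEnd ℂ) u ∈ C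

/-! ### Whitney differentiability -/

/-- `C^p`-Whitney differentiability of `h : D → E` (`D ⊆ ℂ`), with respect to a given
"norm" `nrm` on `E`, with (complex, one-dimensional) Whitney derivatives of order `≤ ℓ`,
`ℓ < p ≤ ℓ + 1`. -/
def WhitneyCp {E : Type*} [AddCommGroup E] [Module ℂ E] (nrm : E → ℝ)
    (D : Set ℂ) (h : ℂ → E) (ℓ : ℕ) (p : ℝ) : Prop :=
  ∃ M : ℝ, ∃ H : ℕ → ℂ → E,
    (∀ x ∈ D, H 0 x = h x) ∧
    (∀ k ≤ ℓ, ∀ x ∈ D, nrm (H k x) ≤ M) ∧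
    (∀ k ≤ ℓ, ∀ x ∈ D, ∀ ε > (0 : ℝ), ∃ δ > (0 : ℝ), ∀ y ∈ D, ‖y - x‖ < δ →
      nrm (H k y - H k x) < ε) ∧
    ∀ k ≤ ℓ, ∀ x ∈ D, ∀ y ∈ D,
      nrm (H k y - ∑ j ∈ Finset.range (ℓ - k + 1),
          ((j.factorial : ℂ)⁻¹ * (y - x) ^ j) • H (j + k) x)
        ≤ M * ‖y - x‖ ^ (p - k)

/-- `C^∞`-Whitney differentiability. -/
def WhitneyCinf {E : Type*} [AddCommGroup E] [Module ℂ E] (nrm : E → ℝ)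
    (D : Set ℂ) (h : ℂ → E) : Prop :=
  ∀ (ℓ : ℕ) (p : ℝ), (ℓ : ℝ) < p → p ≤ ℓ + 1 → WhitneyCp nrm D h ℓ p

/-! ### The standing hypotheses of the main theorem (maps) -/

/-- The data of the main theorem: a Diophantine frequency, an exact symplectic
structure, an analytic family of conformally symplectic maps with conformal factor
`λ(ε) = 1 + α ε^a + O(ε^{a+1})`, and a Lagrangian invariant torus `K0` for the
symplectic map `f_{μ0,0}`. -/
structure MainSetup (d : ℕ) where
  τ : ℝ
  ρ : ℝ
  ω : Fin d → ℝ
  J : (Fin (d + d) → ℂ) → Matrix (Fin (d + d)) (Fin (d + d)) ℂ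
  F : ConfFamily d
  Γ : Set (Fin d → ℂ)
  a : ℕ
  α : ℂ
  μ0 : Fin d → ℂ
  K0 : (Fin d → ℂ) → Fin (d + d) → ℂ
  DK0 : (Fin d → ℂ) → Matrix (Fin (d + d)) (Fin d) ℂ

/-- The hypotheses of the main theorem. -/
structure MainHyps {d : ℕ} (S : MainSetup d) : Prop where
  hd : 0 < d
  hτ : 0 < S.τ
  hρ : 0 < S.ρ
  hdio : IsDiophantine S.ω S.τ
  hJ : SympForm S.J
  hΓopen : IsOpen S.Γ
  hμ0 : S.μ0 ∈ S.Γ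
  hF : IsConfFamily S.F S.J S.Γ
  hlam : Hlambda S.F.lam S.a S.α
  hK0A : MemA S.ρ S.K0
  hK0per : QuasiPeriodic S.K0
  hDK0 : ∀ θ ∈ StripO d S.ρ, hasJacobianAt S.K0 (S.DK0 θ) θ
  hLag : ∀ θ ∈ StripO d S.ρ, (S.DK0 θ)ᵀ * S.J (S.K0 θ) * S.DK0 θ = 0
  hinv : ∀ θ ∈ Strip d S.ρ, S.F.f S.μ0 0 (S.K0 θ) = S.K0 (shift S.ω θ)
  hHND : HNDat 1 S.ω
    (SmatC 1 S.ω S.J S.K0 S.DK0 fun θ => S.F.Df S.μ0 0 (S.K0 θ))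
    (fun θ => rowsFst (AtildeC S.ω S.J S.K0 S.DK0 (fun θ' => S.F.Dmuf S.μ0 0 (S.K0 θ')) θ))
    (fun θ => rowsSnd (AtildeC S.ω S.J S.K0 S.DK0 (fun θ' => S.F.Dmuf S.μ0 0 (S.K0 θ')) θ))

end KAM

/-!
If `‖λ - 1‖ ≤ 2ρ` and `λ ∉ Λ(A;ω,τ,N)`, some `e^{2πik·ω}` lies within `A⁻¹ (2ρ)^{N+1} |k|^{-τ}` of
`λ`. For `ρ ≤ 1` this forces `|e^{2πik·ω} - 1| = O(ρ)`, so the Diophantine condition on `ω` gives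
`|k| ≳ ρ^{-1/τ}`. Covering by these discs and counting the `O(n^{d-1})` frequencies with `|k| = n`,
the measure is `≲ A⁻² ρ^{2(N+1)} ∑_{n ≳ ρ^{-1/τ}} n^{d-1-2τ} ≲ A⁻² ρ^{2(N+1) + (2τ-d)/τ}`;
the tail converges because `2τ > d`.
-/

namespace KAM

open Finset Metric

def l1NormNat {d : ℕ} (k : Fin d → ℤ) : ℕ := ∑ j, (k j).natAbs

theorem intNorm_eq_l1NormNat {d : ℕ} (k : Fin d → ℤ) : intNorm k = l1NormNat k := by
  simp [intNorm, l1NormNat, Nat.cast_natAbs]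

theorem natAbs_le_l1NormNat {d : ℕ} (k : Fin d → ℤ) (j : Fin d) : (k j).natAbs ≤ l1NormNat k :=
  single_le_sum (f := fun j => (k j).natAbs) (fun _ _ => Nat.zero_le _) (mem_univ j)

theorem one_le_intNorm {d : ℕ} {k : Fin d → ℤ} (hk : k ≠ 0) : 1 ≤ intNorm k := by
  obtain ⟨j, hj⟩ := Function.ne_iff.mp hk
  rw [intNorm_eq_l1NormNat, Nat.one_le_cast]
  exact (Int.natAbs_pos.mpr hj).trans_le (natAbs_le_l1NormNat k j)

theorem intNorm_pos {d : ℕ} {k : Fin d → ℤ} (hk : k ≠ 0) : 0 < intNorm k :=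
  zero_lt_one.trans_le (one_le_intNorm hk)

def l1Sphere (d n : ℕ) : Finset (Fin d → ℤ) :=
  {k ∈ Fintype.piFinset fun _ => Icc (-(n : ℤ)) n | l1NormNat k = n}

theorem mem_l1Sphere {d n : ℕ} {k : Fin d → ℤ} : k ∈ l1Sphere d n ↔ l1NormNat k = n := by
  refine ⟨fun h => (mem_filter.mp h).2, fun h => mem_filter.mpr ⟨?_, h⟩⟩
  refine Fintype.mem_piFinset.mpr fun j => mem_Icc.mpr ?_
  have := h ▸ natAbs_le_l1NormNat k j
  omega

theorem card_l1Sphere_le (m n : ℕ) (hn : 1 ≤ n) : #(l1Sphere (m + 1) n) ≤ 3 ^ (m + 1) * n ^ m := by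
  -- a point of the sphere is determined by its first `m` coordinates and the sign of the last one
  have hinj : #(l1Sphere (m + 1) n) ≤
      #((Fintype.piFinset fun _ : Fin m => Icc (-(n : ℤ)) n) ×ˢ ({-1, 0, 1} : Finset ℤ)) := by
    refine card_le_card_of_injOn (fun k => (Fin.init k, (k (Fin.last m)).sign)) ?_ ?_
    · intro k hk
      have hk := Fintype.mem_piFinset.mp (mem_filter.mp hk).1
      refine mem_product.mpr ⟨Fintype.mem_piFinset.mpr fun j => hk _, ?_⟩
      rcases Int.sign_trichotomy (k (Fin.last m)) with h | h | h <;> simp [h]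
    · intro k hk k' hk' heq
      obtain ⟨hinit, hsign⟩ := Prod.mk.inj heq
      have habs : (k (Fin.last m)).natAbs = (k' (Fin.last m)).natAbs := by
        have h := (mem_l1Sphere.mp hk).trans (mem_l1Sphere.mp hk').symm
        simp only [l1NormNat, Fin.sum_univ_castSucc] at h
        have hsum : ∑ j : Fin m, (k j.castSucc).natAbs = ∑ j : Fin m, (k' j.castSucc).natAbs :=
          sum_congr rfl fun j _ => by rw [show k j.castSucc = k' j.castSucc from congrFun hinit j]
        omega
      rw [← Fin.snoc_init_self k, ← Fin.snoc_init_self k', hinit, ← Int.sign_mul_natAbs (k _),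
        ← Int.sign_mul_natAbs (k' _), hsign, habs]
  calc #(l1Sphere (m + 1) n) ≤ (2 * n + 1) ^ m * 3 := by
        have hIcc : ((n : ℤ) + 1 + n).toNat = 2 * n + 1 := by omega
        simpa [card_product, Int.card_Icc, hIcc] using hinj
    _ ≤ (3 * n) ^ m * 3 := by gcongr; omega
    _ = 3 ^ (m + 1) * n ^ m := by ring

theorem inv_ofReal_mul_ofReal_rpow {a b : ℝ} (ha : 0 < a) (hb : 0 < b) (s : ℝ) :
    (ENNReal.ofReal a)⁻¹ * ENNReal.ofReal b ^ s = ENNReal.ofReal (a⁻¹ * b ^ s) := by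
  rw [← ENNReal.ofReal_inv_of_pos ha, ENNReal.ofReal_rpow_of_pos hb,
    ← ENNReal.ofReal_mul (inv_nonneg.mpr ha.le)]

section Diophantine

variable {d : ℕ} {ω : Fin d → ℝ} {τ : ℝ} {lam : ℂ} {k : Fin d → ℤ}

theorem le_nuC (hk : k ≠ 0) :
    (ENNReal.ofReal ‖eDot k ω - lam‖)⁻¹ * ENNReal.ofReal (intNorm k) ^ (-τ) ≤ nuC ω τ lam :=
  le_iSup (fun k : {k : Fin d → ℤ // k ≠ 0} =>
    (ENNReal.ofReal ‖eDot k.1 ω - lam‖)⁻¹ * ENNReal.ofReal (intNorm k.1) ^ (-τ)) ⟨k, hk⟩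

theorem nuC_pos (hd : 0 < d) : 0 < nuC ω τ lam := by
  have hk : (fun _ => 1 : Fin d → ℤ) ≠ 0 := Function.ne_iff.mpr ⟨⟨0, hd⟩, one_ne_zero⟩
  refine lt_of_lt_of_le (ENNReal.mul_pos ?_ ?_) (le_nuC hk)
  · exact ENNReal.inv_ne_zero.mpr ENNReal.ofReal_ne_top
  · exact (ENNReal.rpow_pos (ENNReal.ofReal_pos.mpr (intNorm_pos hk)) ENNReal.ofReal_ne_top).ne'

theorem rpow_intNorm_le_nuC_mul (hν : nuC ω τ lam ≠ ⊤) (hk : k ≠ 0) :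
    intNorm k ^ (-τ) ≤ (nuC ω τ lam).toReal * ‖eDot k ω - lam‖ := by
  have hterm := le_nuC (τ := τ) (lam := lam) (ω := ω) hk
  have hn := intNorm_pos hk
  rcases (norm_nonneg (eDot k ω - lam)).eq_or_lt with h0 | hpos
  · rw [← h0, ENNReal.ofReal_zero, ENNReal.inv_zero, ENNReal.top_mul
      (ENNReal.rpow_pos (ENNReal.ofReal_pos.mpr hn) ENNReal.ofReal_ne_top).ne'] at hterm
    exact absurd (top_le_iff.mp hterm) hν
  · rw [inv_ofReal_mul_ofReal_rpow hpos hn, ENNReal.ofReal_le_iff_le_toReal hν,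
      inv_mul_le_iff₀ hpos] at hterm
    linarith

theorem exists_mul_norm_lt_of_ofReal_lt_nuC {c : ℝ} (h : ENNReal.ofReal c < nuC ω τ lam) :
    ∃ k ≠ 0, c * ‖eDot k ω - lam‖ < intNorm k ^ (-τ) := by
  obtain ⟨⟨k, hk⟩, hlt⟩ := lt_iSup_iff.mp h
  have hn := intNorm_pos hk
  refine ⟨k, hk, ?_⟩
  rcases (norm_nonneg (eDot k ω - lam)).eq_or_lt with h0 | hpos
  · rw [← h0, mul_zero]
    exact Real.rpow_pos_of_pos hn _
  · rw [inv_ofReal_mul_ofReal_rpow hpos hn, ENNReal.ofReal_lt_ofReal_iff', lt_inv_mul_iff₀ hpos]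
      at hlt
    linarith [hlt.1]

theorem one_mem_LambdaSet (ω : Fin d → ℝ) (τ : ℝ) (N : ℕ) (A : ℝ) :
    (1 : ℂ) ∈ LambdaSet ω τ N A := by
  simp [LambdaSet]

theorem exists_mem_ball_of_notMem_LambdaSet {N : ℕ} {A : ℝ} (hA : 0 < A)
    (h : lam ∉ LambdaSet ω τ N A) :
    ∃ k ≠ 0, lam ∈ ball (eDot k ω) (A⁻¹ * ‖lam - 1‖ ^ (N + 1) * intNorm k ^ (-τ)) := by
  have hlam : lam ≠ 1 := by rintro rfl; exact h (one_mem_LambdaSet ω τ N A)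
  have hP : 0 < ‖lam - 1‖ ^ (N + 1) := pow_pos (norm_pos_iff.mpr (sub_ne_zero.mpr hlam)) _
  simp only [LambdaSet, Set.mem_ofPred_eq, not_le] at h
  rw [← ENNReal.div_lt_iff (Or.inl (ENNReal.ofReal_pos.mpr hP).ne') (Or.inl ENNReal.ofReal_ne_top),
    ← ENNReal.ofReal_div_of_pos hP] at h
  obtain ⟨k, hk, hlt⟩ := exists_mul_norm_lt_of_ofReal_lt_nuC h
  refine ⟨k, hk, ?_⟩
  rw [mem_ball, dist_comm, dist_eq_norm, mul_assoc, lt_inv_mul_iff₀ hA]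
  rw [div_mul_eq_mul_div, div_lt_iff₀ hP] at hlt
  linarith

theorem le_intNorm_of_norm_eDot_sub_one_le (hτ : 0 < τ) (hdio : IsDiophantine ω τ)
    (hk : k ≠ 0) {ε : ℝ} (h : ‖eDot k ω - 1‖ ≤ ε) :
    ((nuOmega ω τ).toReal * ε) ^ (-τ⁻¹) ≤ intNorm k := by
  have hn := intNorm_pos hk
  have hpos : 0 < intNorm k ^ (-τ) := Real.rpow_pos_of_pos hn _
  have hle : intNorm k ^ (-τ) ≤ (nuOmega ω τ).toReal * ε :=
    (rpow_intNorm_le_nuC_mul hdio hk).trans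
      (mul_le_mul_of_nonneg_left h ENNReal.toReal_nonneg)
  calc ((nuOmega ω τ).toReal * ε) ^ (-τ⁻¹) ≤ (intNorm k ^ (-τ)) ^ (-τ⁻¹) :=
        Real.rpow_le_rpow_of_nonpos hpos hle (by simp [hτ.le])
    _ = intNorm k := by rw [neg_inv, Real.rpow_rpow_inv hn.le (by simp [hτ.ne'])]

end Diophantine

section TailSums

variable {δ : ℝ}

theorem mul_rpow_neg_one_add_le_sub {x : ℝ} (hx : 0 < x) (hδ : 0 ≤ δ) :
    δ * (x + 1) ^ (-(1 + δ)) ≤ x ^ (-δ) - (x + 1) ^ (-δ) := by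
  -- Bernoulli's `1 + (1 + δ) / x ≤ (1 + 1 / x) ^ (1 + δ)`, after clearing the powers of `x`, `x + 1`
  have hx1 : 0 < x + 1 := by linarith
  have hbern := one_add_mul_self_le_rpow_one_add (s := x⁻¹) (by linarith [inv_pos.mpr hx])
    (p := 1 + δ) (by linarith)
  have hsplit : ∀ y : ℝ, 0 < y → y ^ (-δ) = y * y ^ (-(1 + δ)) := fun y hy => by
    rw [show -δ = 1 + -(1 + δ) by ring, Real.rpow_add hy, Real.rpow_one]
  have hbase : 1 + x⁻¹ = (x + 1) / x := by field_simp
  rw [hbase, Real.div_rpow hx1.le hx.le] at hbern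
  rw [hsplit x hx, hsplit (x + 1) hx1, Real.rpow_neg hx.le, Real.rpow_neg hx1.le]
  have hB : 0 < x ^ (1 + δ) := by positivity
  rw [le_div_iff₀ hB] at hbern
  have hmul : (x + 1 + δ) * x ^ (1 + δ) ≤ x * (x + 1) ^ (1 + δ) := by
    have := mul_le_mul_of_nonneg_left hbern hx.le
    rwa [show x * ((1 + (1 + δ) * x⁻¹) * x ^ (1 + δ)) = (x + 1 + δ) * x ^ (1 + δ) by
      field_simp; ring] at this
  field_simp
  linarith

theorem sum_range_rpow_neg_one_add_le {a : ℝ} (ha : 1 ≤ a) (hδ : 0 < δ) (M : ℕ) :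
    ∑ i ∈ range M, (a + i) ^ (-(1 + δ)) ≤ (1 + δ⁻¹) * a ^ (-δ) := by
  have ha0 : 0 < a := by linarith
  rcases M with _ | M
  · simp only [range_zero, sum_empty]
    positivity
  set f : ℕ → ℝ := fun i => (a + i) ^ (-δ)
  have hterm : ∀ i : ℕ, (a + (i + 1 : ℕ)) ^ (-(1 + δ)) ≤ δ⁻¹ * (f i - f (i + 1)) := fun i => by
    rw [le_inv_mul_iff₀ hδ]
    simpa [f, add_assoc] using
      mul_rpow_neg_one_add_le_sub (x := a + i) (by positivity) hδ.le
  have hhead : (a + (0 : ℕ)) ^ (-(1 + δ)) ≤ a ^ (-δ) := by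
    simpa using Real.rpow_le_rpow_of_exponent_le ha (by linarith : -(1 + δ) ≤ -δ)
  have htail : δ⁻¹ * (f 0 - f M) ≤ δ⁻¹ * a ^ (-δ) := by
    gcongr
    simp only [f, Nat.cast_zero, add_zero, sub_le_self_iff]
    positivity
  rw [sum_range_succ']
  calc ∑ i ∈ range M, (a + (i + 1 : ℕ)) ^ (-(1 + δ)) + (a + (0 : ℕ)) ^ (-(1 + δ))
      ≤ δ⁻¹ * ∑ i ∈ range M, (f i - f (i + 1)) + a ^ (-δ) := by
        rw [mul_sum]
        exact add_le_add (sum_le_sum fun i _ => hterm i) hhead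
    _ ≤ (1 + δ⁻¹) * a ^ (-δ) := by
        rw [sum_range_sub']
        linarith

theorem tsum_ofReal_rpow_neg_one_add_le {a : ℝ} (ha : 1 ≤ a) (hδ : 0 < δ) :
    ∑' i : ℕ, ENNReal.ofReal ((a + i) ^ (-(1 + δ))) ≤ ENNReal.ofReal ((1 + δ⁻¹) * a ^ (-δ)) :=
  ENNReal.tsum_le_of_sum_range_le fun M => by
    rw [← ENNReal.ofReal_sum_of_nonneg fun i _ => by positivity]
    exact ENNReal.ofReal_le_ofReal (sum_range_rpow_neg_one_add_le ha hδ M)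

end TailSums

theorem volume_biUnion_l1Sphere_ball_le {m n : ℕ} (hn : 1 ≤ n) (c : (Fin (m + 1) → ℤ) → ℂ)
    {B : ℝ} (hB : 0 ≤ B) (τ : ℝ) :
    volume (⋃ k ∈ l1Sphere (m + 1) n, ball (c k) (B * (n : ℝ) ^ (-τ))) ≤
      ENNReal.ofReal (π * 3 ^ (m + 1) * B ^ 2 * (n : ℝ) ^ (-(1 + (2 * τ - (m + 1 : ℕ))))) := by
  have hn0 : (0 : ℝ) < n := by exact_mod_cast hn
  have hcard : (#(l1Sphere (m + 1) n) : ℝ) ≤ 3 ^ (m + 1) * (n : ℝ) ^ (m : ℝ) := by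
    rw [Real.rpow_natCast]; exact_mod_cast card_l1Sphere_le m n hn
  have hr : (B * (n : ℝ) ^ (-τ)) ^ 2 = B ^ 2 * (n : ℝ) ^ (-(2 * τ)) := by
    rw [mul_pow, ← Real.rpow_mul_natCast hn0.le]; ring_nf
  calc volume (⋃ k ∈ l1Sphere (m + 1) n, ball (c k) (B * (n : ℝ) ^ (-τ)))
      ≤ ∑ k ∈ l1Sphere (m + 1) n, volume (ball (c k) (B * (n : ℝ) ^ (-τ))) :=
        measure_biUnion_finset_le _ _
    _ = ENNReal.ofReal (#(l1Sphere (m + 1) n) * (π * (B * (n : ℝ) ^ (-τ)) ^ 2)) := by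
        simp only [Complex.volume_ball, sum_const, nsmul_eq_mul]
        rw [← ENNReal.ofReal_natCast, ← ENNReal.ofReal_pow (by positivity),
          ← ENNReal.ofReal_coe_nnreal, NNReal.coe_real_pi, ← ENNReal.ofReal_mul (by positivity),
          ← ENNReal.ofReal_mul (by positivity)]
        congr 1
        ring
    _ ≤ ENNReal.ofReal (π * 3 ^ (m + 1) * B ^ 2 * (n : ℝ) ^ (-(1 + (2 * τ - (m + 1 : ℕ))))) := by
        refine ENNReal.ofReal_le_ofReal ?_
        rw [show -(1 + (2 * τ - (m + 1 : ℕ))) = (m : ℝ) + -(2 * τ) by push_cast; ring,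
          Real.rpow_add hn0, hr]
        calc (#(l1Sphere (m + 1) n) : ℝ) * (π * (B ^ 2 * (n : ℝ) ^ (-(2 * τ))))
            ≤ 3 ^ (m + 1) * (n : ℝ) ^ (m : ℝ) * (π * (B ^ 2 * (n : ℝ) ^ (-(2 * τ)))) := by
              gcongr
          _ = _ := by ring

theorem volume_iUnion_l1Sphere_ball_le {m n0 : ℕ} (hn0 : 1 ≤ n0) (c : (Fin (m + 1) → ℤ) → ℂ)
    {B τ : ℝ} (hB : 0 ≤ B) (hδ : 0 < 2 * τ - (m + 1 : ℕ)) :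
    volume (⋃ i : ℕ, ⋃ k ∈ l1Sphere (m + 1) (n0 + i),
        ball (c k) (B * ((n0 + i : ℕ) : ℝ) ^ (-τ))) ≤
      ENNReal.ofReal (π * 3 ^ (m + 1) * B ^ 2 *
        ((1 + (2 * τ - (m + 1 : ℕ))⁻¹) * (n0 : ℝ) ^ (-(2 * τ - (m + 1 : ℕ))))) := by
  set δ := 2 * τ - (m + 1 : ℕ)
  calc volume (⋃ i : ℕ, ⋃ k ∈ l1Sphere (m + 1) (n0 + i),
        ball (c k) (B * ((n0 + i : ℕ) : ℝ) ^ (-τ)))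
      ≤ ∑' i : ℕ, ENNReal.ofReal (π * 3 ^ (m + 1) * B ^ 2) *
          ENNReal.ofReal (((n0 : ℝ) + i) ^ (-(1 + δ))) := by
        refine (measure_iUnion_le _).trans (ENNReal.tsum_le_tsum fun i => ?_)
        rw [← ENNReal.ofReal_mul (by positivity), ← Nat.cast_add]
        exact volume_biUnion_l1Sphere_ball_le (by omega) c hB τ
    _ ≤ ENNReal.ofReal (π * 3 ^ (m + 1) * B ^ 2) *
          ENNReal.ofReal ((1 + δ⁻¹) * (n0 : ℝ) ^ (-δ)) := by
        rw [ENNReal.tsum_mul_left]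
        gcongr
        exact tsum_ofReal_rpow_neg_one_add_le (by exact_mod_cast hn0) hδ
    _ = _ := (ENNReal.ofReal_mul (by positivity)).symm

theorem exists_le_intNorm_mem_ball_of_notMem_LambdaSet {d : ℕ} {ω : Fin d → ℝ} {τ : ℝ}
    (hτ : 0 < τ) (hdio : IsDiophantine ω τ) {N : ℕ} {A B ε : ℝ} {lam : ℂ} (hA : 0 < A)
    (hB : A⁻¹ * ‖lam - 1‖ ^ (N + 1) ≤ B) (hε : B + ‖lam - 1‖ ≤ ε)
    (h : lam ∉ LambdaSet ω τ N A) :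
    ∃ k : Fin d → ℤ, ((nuOmega ω τ).toReal * ε) ^ (-τ⁻¹) ≤ intNorm k ∧
      lam ∈ ball (eDot k ω) (B * intNorm k ^ (-τ)) := by
  obtain ⟨k, hk, hball⟩ := exists_mem_ball_of_notMem_LambdaSet hA h
  have hball' : lam ∈ ball (eDot k ω) (B * intNorm k ^ (-τ)) :=
    ball_subset_ball (mul_le_mul_of_nonneg_right hB (Real.rpow_nonneg (intNorm_pos hk).le _))
      hball
  have hB0 : 0 ≤ B := hB.trans' (by positivity)
  have hnτ : intNorm k ^ (-τ) ≤ 1 :=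
    Real.rpow_le_one_of_one_le_of_nonpos (one_le_intNorm hk) (by linarith)
  refine ⟨k, le_intNorm_of_norm_eDot_sub_one_le hτ hdio hk ?_, hball'⟩
  rw [mem_ball', dist_eq_norm] at hball'
  calc ‖eDot k ω - 1‖ ≤ ‖eDot k ω - lam‖ + ‖lam - 1‖ := norm_sub_le_norm_sub_add_norm_sub _ _ _
    _ ≤ B * 1 + ‖lam - 1‖ := by gcongr; exact hball'.le.trans (by gcongr)
    _ ≤ ε := by linarith

theorem volume_closedBall_diff_LambdaSet_le {m : ℕ} {ω : Fin (m + 1) → ℝ} {τ : ℝ} (hτ : 0 < τ)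
    (hdio : IsDiophantine ω τ) (hδ : 0 < 2 * τ - (m + 1 : ℕ)) {N : ℕ} {A r B ε : ℝ}
    (hA : 0 < A) (hr : 0 < r) (hB : A⁻¹ * r ^ (N + 1) ≤ B) (hε : B + r ≤ ε) :
    volume {lam : ℂ | ‖lam - 1‖ ≤ r ∧ lam ∉ LambdaSet ω τ N A} ≤
      ENNReal.ofReal (π * 3 ^ (m + 1) * B ^ 2 * ((1 + (2 * τ - (m + 1 : ℕ))⁻¹) *
        ((nuOmega ω τ).toReal * ε) ^ ((2 * τ - (m + 1 : ℕ)) / τ))) := by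
  set δ := 2 * τ - (m + 1 : ℕ)
  set ν := (nuOmega ω τ).toReal
  have hν : 0 < ν := ENNReal.toReal_pos (nuC_pos (Nat.succ_pos m)).ne' hdio
  have hB0 : 0 ≤ B := hB.trans' (by positivity)
  have hνε : 0 < ν * ε := mul_pos hν (by linarith)
  have hx : 0 < (ν * ε) ^ (-τ⁻¹) := Real.rpow_pos_of_pos hνε _
  set n0 := ⌈(ν * ε) ^ (-τ⁻¹)⌉₊
  have hcover : {lam : ℂ | ‖lam - 1‖ ≤ r ∧ lam ∉ LambdaSet ω τ N A} ⊆
      ⋃ i : ℕ, ⋃ k ∈ l1Sphere (m + 1) (n0 + i),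
        ball (eDot k ω) (B * ((n0 + i : ℕ) : ℝ) ^ (-τ)) := by
    rintro lam ⟨hlam, hnot⟩
    obtain ⟨k, hkn, hball⟩ := exists_le_intNorm_mem_ball_of_notMem_LambdaSet (ε := ε) hτ hdio hA
      (hB.trans' (by gcongr)) (by linarith) hnot
    rw [intNorm_eq_l1NormNat] at hkn hball
    have hn0 : n0 ≤ l1NormNat k := Nat.ceil_le.mpr hkn
    simp only [Set.mem_iUnion]
    exact ⟨l1NormNat k - n0, k, mem_l1Sphere.mpr (by omega), by rwa [Nat.add_sub_cancel' hn0]⟩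
  have hn0δ : (n0 : ℝ) ^ (-δ) ≤ (ν * ε) ^ (δ / τ) := by
    calc (n0 : ℝ) ^ (-δ) ≤ ((ν * ε) ^ (-τ⁻¹)) ^ (-δ) :=
          Real.rpow_le_rpow_of_nonpos hx (Nat.le_ceil _) (by linarith)
      _ = (ν * ε) ^ (δ / τ) := by rw [← Real.rpow_mul hνε.le]; ring_nf
  calc volume {lam : ℂ | ‖lam - 1‖ ≤ r ∧ lam ∉ LambdaSet ω τ N A}
      ≤ ENNReal.ofReal (π * 3 ^ (m + 1) * B ^ 2 * ((1 + δ⁻¹) * (n0 : ℝ) ^ (-δ))) :=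
        (measure_mono hcover).trans
          (volume_iUnion_l1Sphere_ball_le (Nat.one_le_ceil_iff.mpr hx) _ hB0 hδ)
    _ ≤ _ := ENNReal.ofReal_le_ofReal (by gcongr)

theorem statement15_general {d : ℕ} (hd : 0 < d) (ω : Fin d → ℝ) (τ : ℝ) (hτ : 0 < τ)
    (hdio : IsDiophantine ω τ) (N : ℕ) (A : ℝ) (hA : 0 < A)
    (h2τ : (d : ℝ) < 2 * τ) :
    ∃ C > (0 : ℝ), ∃ ρ0 > (0 : ℝ), ∀ ρv : ℝ, 0 < ρv → ρv < ρ0 →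
      volume {lam : ℂ | ρv < ‖lam - 1‖ ∧ ‖lam - 1‖ < 2 * ρv ∧ lam ∉ LambdaSet ω τ N A}
        ≤ ENNReal.ofReal
            (C * A ^ (-(2 : ℝ)) * ρv ^ (2 * ((N : ℝ) + 1) + (2 * τ - (d : ℝ)) / τ)) := by
  obtain ⟨m, rfl⟩ : ∃ m, d = m + 1 := ⟨d - 1, by omega⟩
  set δ := 2 * τ - ((m + 1 : ℕ) : ℝ)
  set ν := (nuOmega ω τ).toReal
  set K := A⁻¹ * 2 ^ (N + 1) + 2
  refine ⟨π * 2 ^ (2 * (N + 1)) * 3 ^ (m + 1) * (1 + δ⁻¹) * (ν * K) ^ (δ / τ), ?_, 1, one_pos,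
    fun ρ hρ hρ1 => ?_⟩
  · have hν : 0 < ν := ENNReal.toReal_pos (nuC_pos hd).ne' hdio
    have hδ : 0 < δ := by linarith
    positivity
  have hε : A⁻¹ * (2 * ρ) ^ (N + 1) + 2 * ρ ≤ K * ρ := by
    calc A⁻¹ * (2 * ρ) ^ (N + 1) + 2 * ρ = A⁻¹ * 2 ^ (N + 1) * ρ ^ (N + 1) + 2 * ρ := by ring
      _ ≤ A⁻¹ * 2 ^ (N + 1) * ρ + 2 * ρ := by
        gcongr; exact pow_le_of_le_one hρ.le hρ1.le (by omega)
      _ = K * ρ := by ring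
  calc volume {lam : ℂ | ρ < ‖lam - 1‖ ∧ ‖lam - 1‖ < 2 * ρ ∧ lam ∉ LambdaSet ω τ N A}
      ≤ volume {lam : ℂ | ‖lam - 1‖ ≤ 2 * ρ ∧ lam ∉ LambdaSet ω τ N A} :=
        measure_mono fun lam h => ⟨h.2.1.le, h.2.2⟩
    _ ≤ ENNReal.ofReal (π * 3 ^ (m + 1) * (A⁻¹ * (2 * ρ) ^ (N + 1)) ^ 2 *
          ((1 + δ⁻¹) * (ν * (K * ρ)) ^ (δ / τ))) :=
        volume_closedBall_diff_LambdaSet_le hτ hdio (by linarith) hA (by positivity) le_rfl hε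
    _ = _ := by
        congr 1
        rw [← mul_assoc ν, Real.mul_rpow (by positivity) hρ.le, Real.rpow_add hρ,
          Real.rpow_neg hA.le, Real.rpow_two,
          show 2 * ((N : ℝ) + 1) = ((2 * (N + 1) : ℕ) : ℝ) by push_cast; ring, Real.rpow_natCast]
        ring

/-- if `ω` is Diophantine of class `τ` with `2τ > d`, `N ≥ 1` and
`A > 0`, then for all small `ρ` the two-dimensional Lebesgue measure of the
complement of `Λ(A;ω,τ,N)` in the annulus `ρ < |λ−1| < 2ρ` is at most
`C A^{-2} ρ^{2(N+1) + (2τ−d)/τ}`. -/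
theorem statement15 {d : ℕ} (hd : 0 < d) (ω : Fin d → ℝ) (τ : ℝ) (hτ : 0 < τ)
    (hdio : IsDiophantine ω τ) (N : ℕ) (hN : 1 ≤ N) (A : ℝ) (hA : 0 < A)
    (h2τ : (d : ℝ) < 2 * τ) :
    ∃ C > (0 : ℝ), ∃ ρ0 > (0 : ℝ), ∀ ρv : ℝ, 0 < ρv → ρv < ρ0 →
      volume {lam : ℂ | ρv < ‖lam - 1‖ ∧ ‖lam - 1‖ < 2 * ρv ∧ lam ∉ LambdaSet ω τ N A}
        ≤ ENNReal.ofReal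
            (C * A ^ (-(2 : ℝ)) * ρv ^ (2 * ((N : ℝ) + 1) + (2 * τ - (d : ℝ)) / τ)) :=
  statement15_general hd ω τ hτ hdio N A hA h2τ

end KAM
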